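/- Let A be an abelian category and let X be an ℕ-indexed chain complex in A. Then X is contractible if and only if X is acyclic and split, i.e., there exist morphisms s_n : X_n → X_{n+1} (for all n ≥ 0) such that d_{n+1} ∘ s_n ∘ d_{n+1} = d_{n+1}, where d_{n+1} : X_{n+1} → X_n denotes the differential of X. -/

import Mathlib

/-!
A null-homotopy `h` of the identity kills homology, and the relation `𝟙 = d ≫ h + h ≫ d`
composed with `d` gives `d ≫ h ≫ d = d`, since `d ≫ d = 0`.

Conversely, exactness in degree `0` makes `d₁₀` epi, so `s₀ ≫ d₁₀ = 𝟙`. Given the homotopy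
`hₙ` up to degree `n`, the defect `𝟙 - d ≫ hₙ` on `Xₙ₊₁` is a cycle, hence a boundary by
exactness, and `s ≫ d` is the identity on boundaries because `d ≫ s ≫ d = d`. So
`hₙ₊₁ := (𝟙 - d ≫ hₙ) ≫ sₙ₊₁` continues the homotopy.
-/

open CategoryTheory CategoryTheory.Limits

namespace CategoryTheory.ShortComplex

variable {C : Type*} [Category C] [Preadditive C] {S : ShortComplex C}

lemma Exact.comp_comp_f_eq_self (hS : S.Exact) {s : S.X₂ ⟶ S.X₁}
    (hs : S.f ≫ s ≫ S.f = S.f) {Y : C} (g : Y ⟶ S.X₂) (hg : g ≫ S.g = 0) :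
    g ≫ s ≫ S.f = g := by
  have := hS.hasHomology
  have := hS.epi_toCycles
  have hi : S.iCycles ≫ s ≫ S.f = S.iCycles :=
    (cancel_epi S.toCycles).1 (by rw [S.toCycles_i_assoc, hs, S.toCycles_i])
  rw [← S.liftCycles_i g hg, Category.assoc, hi]

end CategoryTheory.ShortComplex

namespace Homotopy

variable {C ι : Type*} [Category C] [Preadditive C] {c : ComplexShape ι}
  {K : HomologicalComplex C c}

open HomologicalComplex in
lemma exactAt_of_id_zero (h : Homotopy (𝟙 K) 0) (i : ι) [K.HasHomology i] : K.ExactAt i := by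
  rw [exactAt_iff_isZero_homology, IsZero.iff_id_eq_zero]
  simpa only [homologyMap_id, homologyMap_zero] using h.homologyMap_eq i

end Homotopy

namespace ChainComplex

variable {C : Type*} [Category C] [Preadditive C] (X : ChainComplex C ℕ)

section

variable {n : ℕ} {f : X.X n ⟶ X.X (n + 1)} {f' : X.X (n + 1) ⟶ X.X (n + 2)}

lemma d_comp_comp_d_eq_d_of_id_eq
    (h : 𝟙 (X.X (n + 1)) = X.d (n + 1) n ≫ f + f' ≫ X.d (n + 2) (n + 1)) :
    X.d (n + 1) n ≫ f ≫ X.d (n + 1) n = X.d (n + 1) n := by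
  rw [← Category.assoc, eq_sub_of_add_eq h.symm, Preadditive.sub_comp, Category.id_comp,
    Category.assoc, X.d_comp_d, comp_zero, sub_zero]

lemma d_comp_comp_d_eq_d_of_id_eq'
    (h : 𝟙 (X.X (n + 1)) = X.d (n + 1) n ≫ f + f' ≫ X.d (n + 2) (n + 1)) :
    X.d (n + 2) (n + 1) ≫ f' ≫ X.d (n + 2) (n + 1) = X.d (n + 2) (n + 1) := by
  rw [eq_sub_of_add_eq' h.symm, Preadditive.comp_sub, Category.comp_id, X.d_comp_d_assoc,
    zero_comp, sub_zero]

end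

lemma comp_comp_d_eq_self_of_exactAt {n : ℕ} (hX : X.ExactAt (n + 1))
    {s : X.X (n + 1) ⟶ X.X (n + 2)}
    (hs : X.d (n + 2) (n + 1) ≫ s ≫ X.d (n + 2) (n + 1) = X.d (n + 2) (n + 1))
    {Y : C} (g : Y ⟶ X.X (n + 1)) (hg : g ≫ X.d (n + 1) n = 0) :
    g ≫ s ≫ X.d (n + 2) (n + 1) = g :=
  ((X.exactAt_iff' (n + 2) (n + 1) n (by simp) (by simp)).1 hX).comp_comp_f_eq_self hs g hg

lemma id_eq_d_comp_add_of_exactAt {n : ℕ} (hX : X.ExactAt (n + 1))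
    {s : X.X (n + 1) ⟶ X.X (n + 2)}
    (hs : X.d (n + 2) (n + 1) ≫ s ≫ X.d (n + 2) (n + 1) = X.d (n + 2) (n + 1))
    {f : X.X n ⟶ X.X (n + 1)} (hf : X.d (n + 1) n ≫ f ≫ X.d (n + 1) n = X.d (n + 1) n) :
    𝟙 (X.X (n + 1)) =
      X.d (n + 1) n ≫ f + ((𝟙 _ - X.d (n + 1) n ≫ f) ≫ s) ≫ X.d (n + 2) (n + 1) := by
  rw [Category.assoc, X.comp_comp_d_eq_self_of_exactAt hX hs _
    (by rw [Preadditive.sub_comp, Category.id_comp, Category.assoc, hf, sub_self])]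
  abel

variable [HasZeroObject C]

lemma epi_d_one_zero (hX : X.ExactAt 0) : Epi (X.d 1 0) :=
  ((X.sc' 1 0 0).exact_iff_epi (X.shape 0 0 (by simp))).1
    ((X.exactAt_iff' 1 0 0 (by simp) (by simp)).1 hX)

noncomputable def homotopyIdZeroOfSplit (hX : ∀ n, X.ExactAt n) (s : ∀ n, X.X n ⟶ X.X (n + 1))
    (hs : ∀ n, X.d (n + 1) n ≫ s n ≫ X.d (n + 1) n = X.d (n + 1) n) :
    Homotopy (𝟙 X) 0 :=
  have := X.epi_d_one_zero (hX 0)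
  Homotopy.mkInductive _ (s 0)
    (by simpa using (cancel_epi (X.d 1 0)).1 (by simpa using (hs 0).symm))
    ((𝟙 _ - X.d 1 0 ≫ s 0) ≫ s 1)
    (by simpa using X.id_eq_d_comp_add_of_exactAt (hX 1) (hs 1) (hs 0))
    fun n ⟨_, f', h⟩ => ⟨(𝟙 _ - X.d (n + 2) (n + 1) ≫ f') ≫ s (n + 2), by
      simpa using X.id_eq_d_comp_add_of_exactAt (hX (n + 2)) (hs (n + 2))
        (X.d_comp_comp_d_eq_d_of_id_eq' h)⟩

end ChainComplex

theorem contractible_iff_acyclic_and_split {A : Type*} [Category A] [Abelian A]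
    (X : ChainComplex A ℕ) :
    Nonempty (Homotopy (𝟙 X) 0) ↔
      ((∀ n, X.ExactAt n) ∧
        ∃ s : ∀ n, X.X n ⟶ X.X (n + 1),
          ∀ n, X.d (n + 1) n ≫ s n ≫ X.d (n + 1) n = X.d (n + 1) n) := by
  constructor
  · rintro ⟨h⟩
    refine ⟨fun n => h.exactAt_of_id_zero n, fun n => h.hom n (n + 1), fun n => ?_⟩
    apply X.d_comp_comp_d_eq_d_of_id_eq (f' := h.hom (n + 1) (n + 2))
    simpa only [HomologicalComplex.id_f, HomologicalComplex.zero_f, add_zero,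
      Homotopy.dNext_succ_chainComplex, Homotopy.prevD_chainComplex] using h.comm (n + 1)
  · rintro ⟨hX, s, hs⟩
    exact ⟨X.homotopyIdZeroOfSplit hX s hs⟩
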